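/- Let X and Y be sets, let N : X → ℝ be a function such that {x ∈ X : N(x) ≤ c} is finite for every c ∈ ℝ, and let m : X × Y → ℕ satisfy: (a) for every x ∈ X, the set {y ∈ Y : m(x, y) ≠ 0} is finite; (b) for every y ∈ Y, the set T(y) = {x ∈ X : m(x, y) ≠ 0} is nonempty. Say x is a minimal type of y if x ∈ T(y) and N(x) ≤ N(x′) for every x′ ∈ T(y). Assume that the group homomorphism mult : ℤ^(X) → ℤ^(Y) between the free abelian groups on X and on Y, determined by mult([x]) = Σ_{y ∈ Y} m(x, y)·[y], is an isomorphism, and assume that every x ∈ X is a minimal type of at most one y ∈ Y. Then every y ∈ Y has exactly one minimal type φ(y), this minimal type satisfies m(φ(y), y) = 1, and the map φ : Y → X is a bijection. (This is the paper's Lemma at the end of Section 6.1, with X playing the role of the unitary dual of K, Y the set of tempiric representations of G, N the Vogan norm of a K-type, and m the multiplicity function; it shows that the K-theoretic multiplicity isomorphism recovers Vogan's minimal K-type theorem.) -/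
import Mathlib


/-! The paper's Lemma at the end of Section 6.1: if the multiplicity homomorphism between
free abelian groups is an isomorphism and each `x` is a minimal type of at most one `y`,
then minimal types give a bijection. Here `X` plays the role of the unitary dual of `K`,
`Y` the set of tempiric representations of `G`, `N` the Vogan norm and `m` the
multiplicity function. -/

/-- `x` is a minimal type of `y`: it occurs in `y` (`m (x, y) ≠ 0`) and its norm is
minimal among all types occurring in `y`. -/
def IsMinimalType {X Y : Type*} (N : X → ℝ) (m : X × Y → ℕ) (x : X) (y : Y) : Prop :=
  m (x, y) ≠ 0 ∧ ∀ x' : X, m (x', y) ≠ 0 → N x ≤ N x'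

/-- Suppose the sublevel sets of `N` are finite, each `x` occurs in only finitely many `y`,
each `y` contains at least one `x`, the multiplicity homomorphism
`mult : ℤ^(X) → ℤ^(Y)`, `[x] ↦ Σ_y m(x,y)·[y]`, is an isomorphism, and each `x` is a
minimal type of at most one `y`. Then every `y` has exactly one minimal type `φ(y)`,
this minimal type occurs in `y` with multiplicity one, and `φ : Y → X` is a bijection. -/
theorem minimalType_bijection_of_mult_isomorphism
    {X Y : Type*} (N : X → ℝ) (m : X × Y → ℕ)
    (hN : ∀ c : ℝ, {x : X | N x ≤ c}.Finite)
    (ha : ∀ x : X, {y : Y | m (x, y) ≠ 0}.Finite)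
    (hb : ∀ y : Y, ∃ x : X, m (x, y) ≠ 0)
    (mult : (X →₀ ℤ) →+ (Y →₀ ℤ))
    (hmult : ∀ (x : X) (y : Y), mult (Finsupp.single x 1) y = (m (x, y) : ℤ))
    (hiso : Function.Bijective mult)
    (huniq : ∀ (x : X) (y y' : Y),
      IsMinimalType N m x y → IsMinimalType N m x y' → y = y') :
    ∃ φ : Y → X, Function.Bijective φ ∧
      ∀ y : Y, IsMinimalType N m (φ y) y ∧ m (φ y, y) = 1 ∧
        ∀ x : X, IsMinimalType N m x y → x = φ y := by
  classical
  -- evaluation formula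
  have heval : ∀ (f : X →₀ ℤ) (y : Y),
      mult f y = ∑ x ∈ f.support, f x * (m (x, y) : ℤ) := by
    intro f y
    conv_lhs => rw [← Finsupp.sum_single f]
    rw [map_finsuppSum, Finsupp.sum_apply]
    rw [Finsupp.sum]
    refine Finset.sum_congr rfl (fun x _ => ?_)
    have h1 : Finsupp.single x (f x) = (f x) • Finsupp.single x (1 : ℤ) := by simp
    rw [h1, map_zsmul, Finsupp.smul_apply, hmult, smul_eq_mul]
  -- existence of minimal types
  have hexists : ∀ y : Y, ∃ x, IsMinimalType N m x y := by
    intro y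
    obtain ⟨x₀, hx₀⟩ := hb y
    have hfin : ({x : X | m (x, y) ≠ 0 ∧ N x ≤ N x₀}).Finite :=
      (hN (N x₀)).subset (fun x hx => hx.2)
    obtain ⟨x, hxmem, hxmin⟩ := Set.exists_min_image _ N hfin ⟨x₀, hx₀, le_refl _⟩
    refine ⟨x, hxmem.1, fun x' hx' => ?_⟩
    by_cases h : N x' ≤ N x₀
    · exact hxmin x' ⟨hx', h⟩
    · exact le_trans (hxmin x₀ ⟨hx₀, le_refl _⟩) (le_of_not_ge h)
  choose φ hφ using hexists
  have hinj : Function.Injective φ := by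
    intro y y' h
    exact huniq (φ y) y y' (hφ y) (h ▸ hφ y')
  -- surjectivity
  have hsurj : Function.Surjective φ := by
    intro x₀
    set c := N x₀ with hc
    have hXc := hN c
    have hYc : {y : Y | N (φ y) ≤ c}.Finite := by
      refine Set.Finite.subset (Set.Finite.biUnion hXc (fun x _ => ha x)) ?_
      intro y hy
      exact Set.mem_biUnion (show φ y ∈ {x : X | N x ≤ c} from hy) ((hφ y).1)
    set s : Finset X := hXc.toFinset with hs
    set t : Finset Y := hYc.toFinset with ht
    have hcard : s.card ≤ t.card := by
      letI : Fintype ↥(s : Finset X) := FinsetCoe.fintype s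
      let L : (X →₀ ℤ) →ₗ[ℤ] (Y →₀ ℤ) := mult.toIntLinearMap
      let v : ↥s → (Y →₀ ℤ) := fun x => L (Finsupp.single x.1 1)
      have li0 : LinearIndependent ℤ (fun x : ↥s => Finsupp.single (x.1 : X) (1 : ℤ)) :=
        Finsupp.basisSingleOne.linearIndependent.comp Subtype.val Subtype.val_injective
      have li1 : LinearIndependent ℤ v :=
        li0.map' L (LinearMap.ker_eq_bot.mpr hiso.1)
      let P : (Y →₀ ℤ) →ₗ[ℤ] (↥t → ℤ) := LinearMap.pi (fun y => Finsupp.lapply y.1)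
      have hspan : Submodule.span ℤ (Set.range v) ≤ Finsupp.supported ℤ ℤ (↑t : Set Y) := by
        rw [Submodule.span_le]
        rintro _ ⟨x, rfl⟩
        rw [SetLike.mem_coe, Finsupp.mem_supported]
        intro y hy
        have hmy : m (x.1, y) ≠ 0 := by
          intro h0
          have : mult (Finsupp.single x.1 1) y = 0 := by rw [hmult, h0]; simp
          exact Finsupp.mem_support_iff.mp hy this
        have hN1 : N (φ y) ≤ N x.1 := (hφ y).2 x.1 hmy
        have hN2 : N x.1 ≤ c := hXc.mem_toFinset.mp x.2
        simp only [ht, Finset.coe_sort_coe, Set.Finite.coe_toFinset, Set.mem_setOf_eq]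
        exact le_trans hN1 hN2
      have hdisj : Disjoint (Submodule.span ℤ (Set.range v)) (LinearMap.ker P) := by
        rw [Submodule.disjoint_def]
        intro g hg hgk
        have hgs : ↑g.support ⊆ (↑t : Set Y) := (Finsupp.mem_supported ℤ g).mp (hspan hg)
        rw [LinearMap.mem_ker] at hgk
        ext y
        by_cases hyt : y ∈ t
        · have := congrFun hgk ⟨y, hyt⟩
          simpa [P, Finsupp.lapply] using this
        · by_contra h0
          exact hyt (hgs (Finsupp.mem_support_iff.mpr h0))
      have li2 : LinearIndependent ℤ (P ∘ v) := li1.map hdisj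
      have := (Pi.basisFun ℤ ↥t).card_le_card_of_linearIndependent li2
      simpa [Fintype.card_coe] using this
    have hmem : ∀ y ∈ t, φ y ∈ s := by
      intro y hy
      exact hXc.mem_toFinset.mpr (hYc.mem_toFinset.mp hy)
    have hx₀s : x₀ ∈ s := hXc.mem_toFinset.mpr (le_refl c)
    obtain ⟨y, _, hy⟩ := Finset.surj_on_of_inj_on_of_card_le (fun y _ => φ y)
      hmem (fun y₁ y₂ _ _ h => hinj h) hcard x₀ hx₀s
    exact ⟨y, hy.symm⟩
  -- uniqueness of minimal type
  have huniq' : ∀ (x : X) (y : Y), IsMinimalType N m x y → x = φ y := by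
    intro x y hx
    obtain ⟨y', rfl⟩ := hsurj x
    exact congrArg φ (huniq (φ y') y' y (hφ y') hx)
  -- multiplicity one
  have hone : ∀ y : Y, m (φ y, y) = 1 := by
    intro y
    obtain ⟨f, hf⟩ := hiso.2 (Finsupp.single y 1)
    have hf0 : f ≠ 0 := by
      rintro rfl
      rw [map_zero] at hf
      have := DFunLike.congr_fun hf y
      simp at this
    have hsupp : f.support.Nonempty := Finsupp.support_nonempty_iff.mpr hf0
    obtain ⟨xm, hxs, hmax⟩ := f.support.exists_max_image N hsupp
    obtain ⟨ym, hym⟩ := hsurj xm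
    subst hym
    have h1 : mult f ym = f (φ ym) * (m (φ ym, ym) : ℤ) := by
      rw [heval]
      refine Finset.sum_eq_single (φ ym) ?_ ?_
      · intro x hx hne
        by_cases hm : m (x, ym) = 0
        · rw [hm]; simp
        · exfalso
          apply hne
          have hle : N (φ ym) ≤ N x := (hφ ym).2 x hm
          have hge : N x ≤ N (φ ym) := hmax x hx
          refine huniq' x ym ⟨hm, fun x' hx' => ?_⟩
          exact le_trans hge ((hφ ym).2 x' hx')
      · intro h; exact absurd hxs h
    rw [hf] at h1
    have hne0 : f (φ ym) * (m (φ ym, ym) : ℤ) ≠ 0 :=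
      mul_ne_zero (Finsupp.mem_support_iff.mp hxs) (Int.natCast_ne_zero.mpr (hφ ym).1)
    have hyy : y = ym := by
      by_contra hne
      rw [Finsupp.single_apply, if_neg hne] at h1
      exact hne0 h1.symm
    subst hyy
    rw [Finsupp.single_eq_same] at h1
    have hdvd : ((m (φ y, y) : ℤ)) ∣ 1 := ⟨f (φ y), by rw [mul_comm]; exact h1⟩
    have hdvd' : m (φ y, y) ∣ 1 := Int.natCast_dvd_natCast.mp (by simpa using hdvd)
    exact Nat.dvd_one.mp hdvd'
  exact ⟨φ, ⟨hinj, hsurj⟩, fun y => ⟨hφ y, hone y, fun x hx => huniq' x y hx⟩⟩
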